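/- Assume hypotheses (H1) and (H2), and assume Γ* > 0. Then there exist C < ∞ and δ > 0 such that for every β ∈ (0,∞), every function h* attaining the minimum in the variational problem defining CAP_β({□},{⊞}), and every well X_i (i = 1,…,I): max_{η,η' ∈ X_i} |h*(η) − h*(η')| ≤ C e^{−δβ}. -/

import Mathlib

open scoped Classical

variable {X : Type*}

/-- `ω` (restricted to 0,…,L) is a path of allowed moves from `a` to `b`. -/
def IsPathW (rel : X → X → Prop) (a b : X) (L : ℕ) (ω : ℕ → X) : Prop :=
  ω 0 = a ∧ ω L = b ∧ ∀ i < L, rel (ω i) (ω (i + 1))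

/-- The maximal energy along the path `ω = (ω 0, …, ω L)`. -/
noncomputable def pathMax (H : X → ℝ) (L : ℕ) (ω : ℕ → X) : ℝ :=
  (Finset.range (L + 1)).sup' Finset.nonempty_range_add_one fun i => H (ω i)

/-- Communication height Φ(a,b) between two configurations. -/
noncomputable def commH (rel : X → X → Prop) (H : X → ℝ) (a b : X) : ℝ :=
  sInf { m : ℝ | ∃ L ω, IsPathW rel a b L ω ∧ m = pathMax H L ω }

/-- Communication height Φ(A,B) between two sets of configurations. -/
noncomputable def commHS (rel : X → X → Prop) (H : X → ℝ) (A B : Set X) : ℝ :=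
  sInf { m : ℝ | ∃ a ∈ A, ∃ b ∈ B, m = commH rel H a b }

/-- The graph (X,∼) is connected. -/
def ConnGraph (rel : X → X → Prop) : Prop :=
  ∀ a b : X, ∃ L ω, IsPathW rel a b L ω

/-- Partition function Z_β. -/
noncomputable def Zb [Fintype X] (H : X → ℝ) (β : ℝ) : ℝ :=
  ∑ ξ : X, Real.exp (-β * H ξ)

/-- Gibbs measure μ_β. -/
noncomputable def gibbs [Fintype X] (H : X → ℝ) (β : ℝ) (η : X) : ℝ :=
  Real.exp (-β * H η) / Zb H β

/-- Metropolis transition rates c_β. -/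
noncomputable def crate (rel : X → X → Prop) (H : X → ℝ) (β : ℝ) (η η' : X) : ℝ :=
  if rel η η' then Real.exp (-β * max (H η' - H η) 0) else 0

/-- Dirichlet form E_β(h). -/
noncomputable def dirE [Fintype X] (rel : X → X → Prop) (H : X → ℝ) (β : ℝ)
    (h : X → ℝ) : ℝ :=
  (1 / 2) * ∑ η : X, ∑ η' : X, gibbs H β η * crate rel H β η η' * (h η - h η') ^ 2

/-- Capacity CAP_β(A,B). -/
noncomputable def capB [Fintype X] (rel : X → X → Prop) (H : X → ℝ) (β : ℝ)
    (A B : Set X) : ℝ :=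
  sInf { e : ℝ | ∃ h : X → ℝ, (∀ η, 0 ≤ h η ∧ h η ≤ 1) ∧
    (∀ η ∈ A, h η = 1) ∧ (∀ η ∈ B, h η = 0) ∧ e = dirE rel H β h }

/-- `a` and `b` are connected by a path staying inside `S`. -/
def connIn (rel : X → X → Prop) (S : Set X) (a b : X) : Prop :=
  ∃ L ω, IsPathW rel a b L ω ∧ ∀ i ≤ L, ω i ∈ S

/-- Γ* = Φ(□,⊞) − H(□). -/
noncomputable def gammaStar (rel : X → X → Prop) (H : X → ℝ) (a b : X) : ℝ :=
  commH rel H a b - H a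

/-- X** = {η : H(η) < Γ*}. -/
noncomputable def Xss (rel : X → X → Prop) (H : X → ℝ) (a b : X) : Set X :=
  {η : X | H η < gammaStar rel H a b}

/-- The connected component of X** containing `root`. -/
noncomputable def compOf (rel : X → X → Prop) (H : X → ℝ) (a b root : X) : Set X :=
  {η : X | connIn rel (Xss rel H a b) root η}

/-- The wells: X** ∖ (X_□ ∪ X_⊞); its connected components are X_1,…,X_I. -/
noncomputable def wellsSet (rel : X → X → Prop) (H : X → ℝ) (a b : X) : Set X :=
  Xss rel H a b \ (compOf rel H a b a ∪ compOf rel H a b b)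

/-!
The indicator of the component `X_□` of `{H < Γ*}` is admissible for `CAP_β(□, ⊞)`, and
each of its jumps sits on an edge of height at least `Γ*`; so `CAP_β(□, ⊞) ≲ e^{-βΓ*} / Z_β`.
A minimiser `h*` has Dirichlet form equal to the capacity, while an edge inside a well
carries Gibbs weight at least `e^{-βM} / Z_β`, where `M < Γ*` is the highest energy
below `Γ*`. Hence `h*` jumps by at most `|X| e^{-β(Γ* - M)/2}` along such an edge, and a
shortest path inside a well has fewer than `|X|` edges.
-/

open Real

section Paths

theorem connIn.snoc {rel : X → X → Prop} {S : Set X} {a b c : X}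
    (h : connIn rel S a b) (hbc : rel b c) (hc : c ∈ S) : connIn rel S a c := by
  obtain ⟨L, ω, ⟨h0, hL, hs⟩, hm⟩ := h
  refine ⟨L + 1, fun k => if k ≤ L then ω k else c,
    ⟨by simpa using h0, by simp, fun k hk => ?_⟩, fun k _ => ?_⟩
  · rcases Nat.lt_or_ge k L with hkL | hkL
    · simpa [hkL.le, Nat.succ_le_of_lt hkL] using hs k hkL
    · obtain rfl : k = L := by omega
      simpa [hL] using hbc
  · by_cases hkL : k ≤ L
    · simpa [hkL] using hm k hkL
    · simpa [hkL] using hc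

theorem le_pathMax (H : X → ℝ) {L i : ℕ} (ω : ℕ → X) (hi : i ≤ L) :
    H (ω i) ≤ pathMax H L ω :=
  Finset.le_sup' (fun i => H (ω i)) (Finset.mem_range.2 (Nat.lt_succ_of_le hi))

theorem commH_le_pathMax {rel : X → X → Prop} (H : X → ℝ) {a b : X} {L : ℕ} {ω : ℕ → X}
    (hp : IsPathW rel a b L ω) : commH rel H a b ≤ pathMax H L ω := by
  refine csInf_le ⟨H a, ?_⟩ ⟨L, ω, hp, rfl⟩
  rintro m ⟨L', ω', ⟨h0, -⟩, rfl⟩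
  simpa [h0] using le_pathMax H ω' (Nat.zero_le L')

def graphOn (rel : X → X → Prop) (S : Set X) : SimpleGraph X :=
  SimpleGraph.fromRel fun a b => rel a b ∧ a ∈ S ∧ b ∈ S

theorem graphOn_reachable_of_steps {rel : X → X → Prop} {S : Set X} {L : ℕ} {ω : ℕ → X}
    (hstep : ∀ i < L, rel (ω i) (ω (i + 1))) (hS : ∀ i ≤ L, ω i ∈ S) :
    (graphOn rel S).Reachable (ω 0) (ω L) := by
  induction L with
  | zero => rfl
  | succ L ih =>
    refine (ih (fun i hi => hstep i (by omega)) (fun i hi => hS i (by omega))).trans ?_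
    by_cases heq : ω L = ω (L + 1)
    · rw [heq]
    · exact SimpleGraph.Adj.reachable
        ⟨heq, Or.inl ⟨hstep L L.lt_succ_self, hS L L.le_succ, hS (L + 1) le_rfl⟩⟩

theorem connIn.graphOn_reachable {rel : X → X → Prop} {S : Set X} {a b : X}
    (h : connIn rel S a b) : (graphOn rel S).Reachable a b := by
  obtain ⟨L, ω, ⟨rfl, rfl, hs⟩, hm⟩ := h
  exact graphOn_reachable_of_steps hs hm

theorem SimpleGraph.Walk.abs_sub_le_length_mul {G : SimpleGraph X} {f : X → ℝ} {D : ℝ}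
    (hf : ∀ a b, G.Adj a b → |f a - f b| ≤ D) {u v : X} (p : G.Walk u v) :
    |f u - f v| ≤ p.length * D := by
  induction p with
  | nil => simp
  | @cons u v w hadj p ih =>
    calc |f u - f w| ≤ |f u - f v| + |f v - f w| := abs_sub_le _ _ _
      _ ≤ D + p.length * D := add_le_add (hf u v hadj) ih
      _ = (p.cons hadj).length * D := by push_cast [SimpleGraph.Walk.length_cons]; ring

theorem abs_sub_le_card_mul_of_connIn [Fintype X] {rel : X → X → Prop} {S : Set X}
    {f : X → ℝ} {D : ℝ} (hD : 0 ≤ D)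
    (hf : ∀ a b, a ∈ S → b ∈ S → rel a b → |f a - f b| ≤ D) {a b : X}
    (hab : connIn rel S a b) : |f a - f b| ≤ Fintype.card X * D := by
  obtain ⟨p, hp, -⟩ := hab.graphOn_reachable.exists_path_of_dist
  have hadj : ∀ u v, (graphOn rel S).Adj u v → |f u - f v| ≤ D := by
    rintro u v ⟨-, ⟨huv, hu, hv⟩ | ⟨hvu, hv, hu⟩⟩
    · exact hf u v hu hv huv
    · rw [abs_sub_comm]; exact hf v u hv hu hvu
  calc |f a - f b| ≤ p.length * D := p.abs_sub_le_length_mul hadj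
    _ ≤ Fintype.card X * D := by gcongr; exact hp.length_lt.le

end Paths

section Dirichlet

variable [Fintype X] {rel : X → X → Prop} {H : X → ℝ} {β : ℝ}

theorem Zb_pos [Nonempty X] (H : X → ℝ) (β : ℝ) : 0 < Zb H β :=
  Finset.sum_pos (fun _ _ => exp_pos _) Finset.univ_nonempty

theorem gibbs_mul_crate_of_rel {η η' : X} (h : rel η η') :
    gibbs H β η * crate rel H β η η' = exp (-β * max (H η) (H η')) / Zb H β := by
  have hmax : max (H η) (H η') = H η + max (H η' - H η) 0 := by
    rw [← max_add_add_left]; simp [max_comm]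
  rw [gibbs, crate, if_pos h, div_mul_eq_mul_div, ← exp_add, hmax]
  ring_nf

theorem gibbs_mul_crate_nonneg (η η' : X) : 0 ≤ gibbs H β η * crate rel H β η η' := by
  by_cases h : rel η η'
  · have : Nonempty X := ⟨η⟩
    rw [gibbs_mul_crate_of_rel h]
    exact div_nonneg (exp_pos _).le (Zb_pos H β).le
  · simp [crate, h]

theorem dirE_nonneg (f : X → ℝ) : 0 ≤ dirE rel H β f :=
  mul_nonneg (by norm_num) <| Finset.sum_nonneg fun _ _ => Finset.sum_nonneg fun _ _ =>
    mul_nonneg (gibbs_mul_crate_nonneg _ _) (sq_nonneg _)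

theorem gibbs_mul_crate_mul_sq_le_two_mul_dirE (f : X → ℝ) (a b : X) :
    gibbs H β a * crate rel H β a b * (f a - f b) ^ 2 ≤ 2 * dirE rel H β f := by
  have hterm := fun η η' => mul_nonneg (gibbs_mul_crate_nonneg (rel := rel) (H := H) (β := β)
    η η') (sq_nonneg (f η - f η'))
  calc gibbs H β a * crate rel H β a b * (f a - f b) ^ 2
      ≤ ∑ η', gibbs H β a * crate rel H β a η' * (f a - f η') ^ 2 :=
        Finset.single_le_sum (fun η' _ => hterm a η') (Finset.mem_univ b)
    _ ≤ ∑ η, ∑ η', gibbs H β η * crate rel H β η η' * (f η - f η') ^ 2 :=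
        Finset.single_le_sum (f := fun η => ∑ η', _)
          (fun η _ => Finset.sum_nonneg fun η' _ => hterm η η') (Finset.mem_univ a)
    _ = 2 * dirE rel H β f := by rw [dirE]; ring

theorem capB_le_dirE {A B : Set X} {f : X → ℝ} (hf : ∀ η, 0 ≤ f η ∧ f η ≤ 1)
    (hA : ∀ η ∈ A, f η = 1) (hB : ∀ η ∈ B, f η = 0) :
    capB rel H β A B ≤ dirE rel H β f := by
  refine csInf_le ⟨0, ?_⟩ ⟨f, hf, hA, hB, rfl⟩
  rintro e ⟨g, -, -, -, rfl⟩
  exact dirE_nonneg g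

theorem gibbs_mul_crate_le_of_le_max (hβ : 0 ≤ β) {Γ : ℝ} {a b : X} (hab : rel a b)
    (hΓ : Γ ≤ max (H a) (H b)) :
    gibbs H β a * crate rel H β a b ≤ exp (-β * Γ) / Zb H β := by
  have : Nonempty X := ⟨a⟩
  rw [gibbs_mul_crate_of_rel hab]
  exact div_le_div_of_nonneg_right
    (exp_le_exp.2 (mul_le_mul_of_nonpos_left hΓ (neg_nonpos.2 hβ))) (Zb_pos H β).le

theorem two_mul_dirE_indicator_le (hsymm : ∀ ⦃a b⦄, rel a b → rel b a) (hβ : 0 ≤ β)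
    {K : Set X} {Γ : ℝ} (hK : ∀ a b, rel a b → a ∈ K → b ∉ K → Γ ≤ H b) :
    2 * dirE rel H β (K.indicator 1) ≤ Fintype.card X ^ 2 * (exp (-β * Γ) / Zb H β) := by
  have hterm : ∀ a b, gibbs H β a * crate rel H β a b * (K.indicator 1 a - K.indicator 1 b) ^ 2
      ≤ exp (-β * Γ) / Zb H β := by
    intro a b
    have hZ : 0 ≤ Zb H β := have : Nonempty X := ⟨a⟩; (Zb_pos H β).le
    by_cases hab : rel a b
    · by_cases ha : a ∈ K <;> by_cases hb : b ∈ K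
      · simpa [ha, hb] using div_nonneg (exp_pos _).le hZ
      · simpa [ha, hb] using
          gibbs_mul_crate_le_of_le_max hβ hab ((hK a b hab ha hb).trans (le_max_right _ _))
      · simpa [ha, hb] using gibbs_mul_crate_le_of_le_max hβ hab
          ((hK b a (hsymm hab) hb ha).trans (le_max_left _ _))
      · simpa [ha, hb] using div_nonneg (exp_pos _).le hZ
    · simpa [crate, hab] using div_nonneg (exp_pos _).le hZ
  calc 2 * dirE rel H β (K.indicator 1)
      = ∑ a, ∑ b, gibbs H β a * crate rel H β a b * (K.indicator 1 a - K.indicator 1 b) ^ 2 := by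
        rw [dirE]; ring
    _ ≤ ∑ _a : X, ∑ _b : X, exp (-β * Γ) / Zb H β :=
        Finset.sum_le_sum fun a _ => Finset.sum_le_sum fun b _ => hterm a b
    _ = Fintype.card X ^ 2 * (exp (-β * Γ) / Zb H β) := by
        simp only [Finset.sum_const, Finset.card_univ, nsmul_eq_mul]; ring

theorem abs_sub_le_of_two_mul_dirE_le (hβ : 0 ≤ β) {f : X → ℝ} {c Γ M : ℝ} (hc : 0 ≤ c)
    (hE : 2 * dirE rel H β f ≤ c ^ 2 * (exp (-β * Γ) / Zb H β)) {a b : X} (hab : rel a b)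
    (hM : max (H a) (H b) ≤ M) :
    |f a - f b| ≤ c * exp (-((Γ - M) / 2) * β) := by
  have hZ : 0 < Zb H β := have : Nonempty X := ⟨a⟩; Zb_pos H β
  have hweight : exp (-β * M) * (f a - f b) ^ 2 ≤ c ^ 2 * exp (-β * Γ) := by
    have h := gibbs_mul_crate_mul_sq_le_two_mul_dirE (rel := rel) (H := H) (β := β) f a b
    rw [gibbs_mul_crate_of_rel hab, div_mul_eq_mul_div] at h
    rw [← mul_div_assoc] at hE
    calc exp (-β * M) * (f a - f b) ^ 2 ≤ exp (-β * max (H a) (H b)) * (f a - f b) ^ 2 :=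
          mul_le_mul_of_nonneg_right
            (exp_le_exp.2 (mul_le_mul_of_nonpos_left hM (neg_nonpos.2 hβ))) (sq_nonneg _)
      _ ≤ c ^ 2 * exp (-β * Γ) := (div_le_div_iff_of_pos_right hZ).1 (h.trans hE)
  refine abs_le_of_sq_le_sq ?_ (by positivity)
  calc (f a - f b) ^ 2 = exp (β * M) * (exp (-β * M) * (f a - f b) ^ 2) := by
        rw [← mul_assoc, ← exp_add]; simp
    _ ≤ exp (β * M) * (c ^ 2 * exp (-β * Γ)) := by gcongr
    _ = (c * exp (-((Γ - M) / 2) * β)) ^ 2 := by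
        rw [mul_pow, ← exp_nat_mul, mul_left_comm, ← exp_add]; ring_nf

end Dirichlet

section Landscape

variable {rel : X → X → Prop} {H : X → ℝ}

theorem exists_lt_forall_le_of_lt [Fintype X] (f : X → ℝ) (c : ℝ) :
    ∃ M < c, ∀ x, f x < c → f x ≤ M := by
  by_cases hs : (Finset.univ.filter fun x => f x < c).Nonempty
  · obtain ⟨x₀, hx₀, hmax⟩ := Finset.exists_max_image _ f hs
    exact ⟨f x₀, (Finset.mem_filter.1 hx₀).2, fun x hx => hmax x (by simpa using hx)⟩
  · exact ⟨c - 1, by linarith, fun x hx => absurd ⟨x, by simpa using hx⟩ hs⟩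

theorem mem_compOf_self {a b r : X} (hr : r ∈ Xss rel H a b) : r ∈ compOf rel H a b r :=
  ⟨0, fun _ => r, ⟨rfl, rfl, by simp⟩, fun _ _ => hr⟩

theorem notMem_compOf_left {a b : X} (ha : 0 ≤ H a) : b ∉ compOf rel H a b a := by
  rintro ⟨L, ω, hp, hm⟩
  have hlt : pathMax H L ω < gammaStar rel H a b :=
    (Finset.sup'_lt_iff _).2 fun i hi => hm i (Nat.lt_succ_iff.1 (Finset.mem_range.1 hi))
  have := commH_le_pathMax H hp
  rw [gammaStar] at hlt
  linarith

theorem gammaStar_le_of_rel_of_mem_compOf {a b r u v : X} (hu : u ∈ compOf rel H a b r)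
    (huv : rel u v) (hv : v ∉ compOf rel H a b r) : gammaStar rel H a b ≤ H v :=
  not_lt.1 fun h => hv (hu.snoc huv h)

end Landscape

theorem stmt_17_general [Fintype X] (rel : X → X → Prop) (H : X → ℝ)
    (hsymm : Symmetric rel)
    (sq bx : X) (Hsq : H sq = 0)
    (hΓ : 0 < gammaStar rel H sq bx) :
    ∃ C : ℝ, ∃ δ : ℝ, 0 < δ ∧ ∀ β : ℝ, 0 < β →
      ∀ hstar : X → ℝ,
        (∀ η, 0 ≤ hstar η ∧ hstar η ≤ 1) → hstar sq = 1 → hstar bx = 0 →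
        dirE rel H β hstar = capB rel H β {sq} {bx} →
        ∀ η η' : X, connIn rel (wellsSet rel H sq bx) η η' →
          |hstar η - hstar η'| ≤ C * Real.exp (-δ * β) := by
  set Γ := gammaStar rel H sq bx
  obtain ⟨M, hMΓ, hM⟩ := exists_lt_forall_le_of_lt H Γ
  refine ⟨Fintype.card X ^ 2, (Γ - M) / 2, by linarith,
    fun β hβ hstar _ _ _ hmin η η' hηη' => ?_⟩
  set K := compOf rel H sq bx sq
  have hsqK : sq ∈ K := mem_compOf_self (show H sq < Γ by rwa [Hsq])
  have hbxK : bx ∉ K := notMem_compOf_left Hsq.ge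
  have hcap : 2 * dirE rel H β hstar ≤ Fintype.card X ^ 2 * (exp (-β * Γ) / Zb H β) :=
    calc 2 * dirE rel H β hstar = 2 * capB rel H β {sq} {bx} := by rw [hmin]
      _ ≤ 2 * dirE rel H β (K.indicator 1) := by
        gcongr
        refine capB_le_dirE (fun ξ => ?_) (by simp [hsqK]) (by simp [hbxK])
        by_cases hξ : ξ ∈ K <;> simp [hξ]
      _ ≤ _ := two_mul_dirE_indicator_le hsymm hβ.le fun _ _ huv hu hv =>
        gammaStar_le_of_rel_of_mem_compOf hu huv hv
  have hstep : ∀ a b, a ∈ wellsSet rel H sq bx → b ∈ wellsSet rel H sq bx → rel a b →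
      |hstar a - hstar b| ≤ Fintype.card X * exp (-((Γ - M) / 2) * β) :=
    fun a b ha hb hab => abs_sub_le_of_two_mul_dirE_le hβ.le (by positivity) (by simpa using hcap)
      hab (max_le (hM a ha.1) (hM b hb.1))
  calc |hstar η - hstar η'|
      ≤ Fintype.card X * (Fintype.card X * exp (-((Γ - M) / 2) * β)) :=
        abs_sub_le_card_mul_of_connIn (by positivity) hstep hηη'
    _ = _ := by ring

/-- under (H1)–(H2) and Γ* > 0, there exist C < ∞ and δ > 0 such
that every minimizer h* of the variational problem for CAP_β({□},{⊞}) is, up to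
Ce^{−δβ}, constant on every well X_i (i.e. on every connected component of
X** ∖ (X_□ ∪ X_⊞)): |h*(η) − h*(η')| ≤ Ce^{−δβ} for η,η' in the same well. -/
theorem stmt_17 [Fintype X] (rel : X → X → Prop) (H : X → ℝ)
    (hsymm : Symmetric rel) (hconn : ConnGraph rel)
    (sq bx : X) (hne : sq ≠ bx) (Hsq : H sq = 0)
    -- (H1): X_stab = {⊞}
    (hH1 : {η : X | ∀ ξ, H η ≤ H ξ} = {bx})
    -- (H2): ∃ V* < Γ* with V_η ≤ V* for all η ∉ {□,⊞}
    (hH2 : ∃ Vs : ℝ, Vs < gammaStar rel H sq bx ∧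
      ∀ η : X, η ≠ sq → η ≠ bx →
        ({ξ : X | H ξ < H η}).Nonempty ∧
        commHS rel H {η} {ξ : X | H ξ < H η} - H η ≤ Vs)
    (hΓ : 0 < gammaStar rel H sq bx) :
    ∃ C : ℝ, ∃ δ : ℝ, 0 < δ ∧ ∀ β : ℝ, 0 < β →
      ∀ hstar : X → ℝ,
        (∀ η, 0 ≤ hstar η ∧ hstar η ≤ 1) → hstar sq = 1 → hstar bx = 0 →
        dirE rel H β hstar = capB rel H β {sq} {bx} →
        ∀ η η' : X, connIn rel (wellsSet rel H sq bx) η η' →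
          |hstar η - hstar η'| ≤ C * Real.exp (-δ * β) :=
  stmt_17_general rel H hsymm sq bx Hsq hΓ
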